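/- The subalgebra B_0 of B = B_q(s,t,ϕ) generated by C_s, C_t, K^{±1} is commutative, and there is an F-algebra isomorphism B_0 → F[λ_0^{±1}, λ_1, λ_2] sending K^{±1} ↦ λ_0^{±1}, C_s ↦ λ_1, C_t ↦ λ_2. -/

import Mathlib

open LaurentPolynomial

noncomputable section

/-- The Laurent polynomial `ψ(c·λ)`. -/
noncomputable def lscale {F : Type*} [Field F] (c : F) (ψ : LaurentPolynomial F) :
    LaurentPolynomial F :=
  Finsupp.sum ψ.coeff fun i a => (a * c ^ i) • (T i : LaurentPolynomial F)

/-- The map `ψ ↦ ψ_{s,t}` of Definition 2.4: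
`ψ_{s,t}(λ) = ψ(q⁻¹λ) − (q^{−2s}+q^{−2t})ψ(qλ) + q^{−2s−2t}ψ(q³λ)`. -/
noncomputable def adu {F : Type*} [Field F] (q : F) (s t : ℤ) (ψ : LaurentPolynomial F) :
    LaurentPolynomial F :=
  lscale q⁻¹ ψ - (q ^ (-2*s) + q ^ (-2*t)) • lscale q ψ + q ^ (-2*s-2*t) • lscale (q^3) ψ

/-- `F[λ,λ⁻¹]_{s,t}`: the span of the monomials `λ^i`, `i ∉ {s,t}`. -/
noncomputable def lstSpan (F : Type*) [Field F] (s t : ℤ) :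
    Submodule F (LaurentPolynomial F) :=
  Submodule.span F {ψ : LaurentPolynomial F | ∃ i : ℤ, i ≠ s ∧ i ≠ t ∧ ψ = T i}

/-- `x^i` for `i : ℤ`, interpreting negative powers via a designated inverse `y`. -/
def zpow2 {B : Type*} [Monoid B] (x y : B) (i : ℤ) : B :=
  if 0 ≤ i then x ^ i.toNat else y ^ (-i).toNat

/-- Evaluation `ψ(c·x)` of a Laurent polynomial `ψ`, where `y` plays the role of `x⁻¹`. -/
noncomputable def leval {F : Type*} [Field F] {B : Type*} [Ring B] [Algebra F B]
    (ψ : LaurentPolynomial F) (c : F) (x y : B) : B :=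
  Finsupp.sum ψ.coeff fun i a => (a * c ^ i) • zpow2 x y i

inductive BGen | cs | ct | e | f | k | kinv
deriving DecidableEq

open FreeAlgebra in
/-- Defining relations for `B_q(s,t,φ)`. -/
inductive BRel {F : Type*} [Field F] (q : F) (s t : ℤ) (φ : LaurentPolynomial F) :
    FreeAlgebra F BGen → FreeAlgebra F BGen → Prop
  | csCentral (x) : BRel q s t φ (ι F BGen.cs * x) (x * ι F BGen.cs)
  | ctCentral (x) : BRel q s t φ (ι F BGen.ct * x) (x * ι F BGen.ct)
  | kkinv : BRel q s t φ (ι F BGen.k * ι F BGen.kinv) 1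
  | kinvk : BRel q s t φ (ι F BGen.kinv * ι F BGen.k) 1
  | ke : BRel q s t φ (ι F BGen.k * ι F BGen.e) (q ^ 2 • (ι F BGen.e * ι F BGen.k))
  | kf : BRel q s t φ (ι F BGen.k * ι F BGen.f) ((q ^ 2)⁻¹ • (ι F BGen.f * ι F BGen.k))
  | fe : BRel q s t φ (ι F BGen.f * ι F BGen.e)
      (q ^ s • (ι F BGen.cs * zpow2 (ι F BGen.k) (ι F BGen.kinv) s)
        + q ^ t • (ι F BGen.ct * zpow2 (ι F BGen.k) (ι F BGen.kinv) t)
        + leval φ q (ι F BGen.k) (ι F BGen.kinv))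
  | ef : BRel q s t φ (ι F BGen.e * ι F BGen.f)
      (q ^ (-s) • (ι F BGen.cs * zpow2 (ι F BGen.k) (ι F BGen.kinv) s)
        + q ^ (-t) • (ι F BGen.ct * zpow2 (ι F BGen.k) (ι F BGen.kinv) t)
        + leval φ q⁻¹ (ι F BGen.k) (ι F BGen.kinv))

/-- The algebra `B_q(s,t,φ)`. -/
def BAlg {F : Type*} [Field F] (q : F) (s t : ℤ) (φ : LaurentPolynomial F) : Type _ :=
  RingQuot (BRel q s t φ)

noncomputable instance {F : Type*} [Field F] (q : F) (s t : ℤ) (φ : LaurentPolynomial F) :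
    Ring (BAlg q s t φ) := inferInstanceAs (Ring (RingQuot _))

noncomputable instance {F : Type*} [Field F] (q : F) (s t : ℤ) (φ : LaurentPolynomial F) :
    Algebra F (BAlg q s t φ) := inferInstanceAs (Algebra F (RingQuot _))

/-- The images of the generators in `B_q(s,t,φ)`. -/
noncomputable def bgen {F : Type*} [Field F] (q : F) (s t : ℤ) (φ : LaurentPolynomial F)
    (g : BGen) : BAlg q s t φ :=
  RingQuot.mkAlgHom F (BRel q s t φ) (FreeAlgebra.ι F g)


/-!
The map `σ : F[λ₀^{±1}, λ₁, λ₂] → B` with `λ₀ ↦ K`, `λ₁ ↦ C_s`, `λ₂ ↦ C_t` is an algebra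
homomorphism because `C_s, C_t` are central and `K` is a unit, and its image is `B₀`; so everything
reduces to the injectivity of `σ`. For that, let `B` act on the free module with basis `v n`
(`n : ℤ`) over `A = F[λ₀^{±1}, λ₁, λ₂]` by `K v n = q^(-2n) λ₀ v n`, `F v n = v (n+1)`,
`E v n = a(n) v (n-1)`, and `C_s, C_t` as `λ₁, λ₂`, where `a(n)` is the right-hand side of the
`FE` relation evaluated at `K = q^(-2n) λ₀`. The `EF` relation holds because substituting `q⁻²K`
for `K` turns the right-hand side of `FE` into that of `EF`. Finally `σ p` acts on `v 0` as
multiplication by `p`, which recovers `p`.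
-/

lemma map_zpow2 {B C : Type*} [Monoid B] [Monoid C] {G : Type*} [FunLike G B C]
    [MonoidHomClass G B C] (f : G) (x y : B) (i : ℤ) :
    f (zpow2 x y i) = zpow2 (f x) (f y) i := by
  unfold zpow2; split_ifs <;> rw [map_pow]

lemma map_leval {F B C : Type*} [Field F] [Ring B] [Algebra F B] [Ring C] [Algebra F C]
    (f : B →ₐ[F] C) (ψ : LaurentPolynomial F) (c : F) (x y : B) :
    f (leval ψ c x y) = leval ψ c (f x) (f y) := by
  simp only [_root_.leval, map_finsuppSum, map_smul, map_zpow2]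

section Scaling

variable {F B : Type*} [Field F] [Ring B] [Algebra F B]

lemma zpow2_smul (a : F) (x y : B) (i : ℤ) :
    zpow2 (a • x) (a⁻¹ • y) i = a ^ i • zpow2 x y i := by
  unfold zpow2
  split_ifs with h
  · rw [smul_pow, ← zpow_natCast, Int.toNat_of_nonneg h]
  · rw [smul_pow, ← zpow_natCast, ← zpow_neg_one, ← zpow_mul, Int.toNat_of_nonneg (by omega)]
    ring_nf

lemma leval_smul (ψ : LaurentPolynomial F) (c a : F) (x y : B) :
    leval ψ c (a • x) (a⁻¹ • y) = leval ψ (c * a) x y := by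
  simp only [_root_.leval, zpow2_smul, smul_smul, mul_zpow, mul_assoc]

end Scaling

section RelationRHS

variable {F A B : Type*} [Field F] [Ring A] [Algebra F A] [Ring B] [Algebra F B]
  (q : F) (s t : ℤ) (φ : LaurentPolynomial F)

/-- The right-hand sides of the relations `FE = …` and `EF = …` of `B_q(s,t,φ)`, as functions of
the generators `C_s, C_t, K, K⁻¹`. -/
def feRHS (cs ct k kinv : A) : A :=
  q ^ s • (cs * zpow2 k kinv s) + q ^ t • (ct * zpow2 k kinv t) + leval φ q k kinv

def efRHS (cs ct k kinv : A) : A :=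
  q ^ (-s) • (cs * zpow2 k kinv s) + q ^ (-t) • (ct * zpow2 k kinv t) + leval φ q⁻¹ k kinv

lemma map_feRHS (f : A →ₐ[F] B) (cs ct k kinv : A) :
    f (feRHS q s t φ cs ct k kinv) = feRHS q s t φ (f cs) (f ct) (f k) (f kinv) := by
  simp only [feRHS, map_add, map_smul, map_mul, map_zpow2, map_leval]

lemma map_efRHS (f : A →ₐ[F] B) (cs ct k kinv : A) :
    f (efRHS q s t φ cs ct k kinv) = efRHS q s t φ (f cs) (f ct) (f k) (f kinv) := by
  simp only [efRHS, map_add, map_smul, map_mul, map_zpow2, map_leval]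

lemma feRHS_smul (hq : q ≠ 0) (cs ct k kinv : A) :
    feRHS q s t φ cs ct ((q ^ 2)⁻¹ • k) ((q ^ 2)⁻¹⁻¹ • kinv) = efRHS q s t φ cs ct k kinv := by
  have hscale (i : ℤ) : q ^ i * (q ^ 2)⁻¹ ^ i = q ^ (-i) := by
    rw [← mul_zpow, ← zpow_neg_one, ← zpow_natCast, ← zpow_mul, ← zpow_one_add₀ hq]; norm_num
  simp only [feRHS, efRHS, zpow2_smul, leval_smul, mul_smul_comm, smul_smul, hscale]
  congr 2
  field_simp

end RelationRHS

section WeightedShift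

variable (F : Type*) {A : Type*} [Field F] [CommRing A] [Algebra F A]

def weightedShift (k : ℤ) (w : ℤ → A) : Module.End F (ℤ →₀ A) :=
  Finsupp.lsum F fun n => (Finsupp.lsingle (n + k)).comp (LinearMap.mulLeft F (w n))

variable {F}

@[simp] lemma weightedShift_single (k : ℤ) (w : ℤ → A) (n : ℤ) (c : A) :
    weightedShift F k w (Finsupp.single n c) = Finsupp.single (n + k) (w n * c) := by
  rw [weightedShift, Finsupp.lsum_single]; rfl

lemma weightedShift_mul_weightedShift (k l : ℤ) (w v : ℤ → A) :
    weightedShift F k w * weightedShift F l v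
      = weightedShift F (l + k) fun n => w (n + l) * v n := by
  refine Finsupp.lhom_ext fun n c => ?_
  simp only [Module.End.mul_apply, weightedShift_single, mul_assoc, add_assoc]

lemma smul_weightedShift (a : F) (k : ℤ) (w : ℤ → A) :
    a • weightedShift F k w = weightedShift F k (a • w) := by
  refine Finsupp.lhom_ext fun n c => ?_
  simp only [LinearMap.smul_apply, weightedShift_single, Finsupp.smul_single, Pi.smul_apply,
    smul_mul_assoc]

variable (F) in
def diagonal : (ℤ → A) →ₐ[F] Module.End F (ℤ →₀ A) where
  toFun := weightedShift F 0
  map_one' := Finsupp.lhom_ext fun n c => by simp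
  map_mul' w v := by simp only [weightedShift_mul_weightedShift, add_zero]; rfl
  map_zero' := Finsupp.lhom_ext fun n c => by simp
  map_add' w v := Finsupp.lhom_ext fun n c => by simp [add_mul]
  commutes' a := Finsupp.lhom_ext fun n c => by simp [Algebra.smul_def]

lemma diagonal_apply (w : ℤ → A) : diagonal F w = weightedShift F 0 w := rfl

lemma commute_diagonal_const (z : A) (k : ℤ) (w : ℤ → A) :
    Commute (diagonal F fun _ => z) (weightedShift F k w) := by
  simp only [Commute, SemiconjBy, diagonal_apply, weightedShift_mul_weightedShift, mul_comm z,
    add_zero, zero_add]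

end WeightedShift

lemma FreeAlgebra.commute_lift {R X A : Type*} [CommSemiring R] [Semiring A] [Algebra R A]
    {f : X → A} {z : A} (h : ∀ x, Commute z (f x)) (a : FreeAlgebra R X) :
    Commute z (FreeAlgebra.lift R f a) := by
  induction a with
  | grade0 r => rw [AlgHom.commutes]; exact Algebra.commute_algebraMap_right r z
  | grade1 x => rw [FreeAlgebra.lift_ι_apply]; exact h x
  | mul a b ha hb => rw [map_mul]; exact ha.mul_right hb
  | add a b ha hb => rw [map_add]; exact ha.add_right hb

section VermaModule

variable {F A : Type*} [Field F] [CommRing A] [Algebra F A]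
  (q : F) (s t : ℤ) (φ : LaurentPolynomial F) (cs ct : A) (u : Aˣ)

def kWeight (n : ℤ) : A := (q ^ 2)⁻¹ ^ n • (u : A)

def kinvWeight (n : ℤ) : A := ((q ^ 2)⁻¹ ^ n)⁻¹ • (↑u⁻¹ : A)

def eWeight : ℤ → A :=
  feRHS q s t φ (fun _ => cs) (fun _ => ct) (kWeight q u) (kinvWeight q u)

variable {q}

lemma kWeight_add (hq : q ≠ 0) (n m : ℤ) :
    kWeight q u (n + m) = (q ^ 2)⁻¹ ^ m • kWeight q u n := by
  rw [kWeight, kWeight, smul_smul, zpow_add₀ (by simpa using hq), mul_comm]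

lemma kinvWeight_add_one (hq : q ≠ 0) (n : ℤ) :
    kinvWeight q u (n + 1) = (q ^ 2)⁻¹⁻¹ • kinvWeight q u n := by
  rw [kinvWeight, kinvWeight, smul_smul, zpow_add_one₀ (by simpa using hq), mul_inv, mul_comm]

lemma kWeight_mul_kinvWeight (hq : q ≠ 0) : kWeight q u * kinvWeight q u = 1 := by
  funext n
  rw [Pi.mul_apply, kWeight, kinvWeight, smul_mul_smul_comm, Units.mul_inv,
    mul_inv_cancel₀ (zpow_ne_zero _ (by simpa using hq)), one_smul, Pi.one_apply]

lemma eWeight_add_one (hq : q ≠ 0) :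
    (fun n => eWeight q s t φ cs ct u (n + 1))
      = efRHS q s t φ (fun _ => cs) (fun _ => ct) (kWeight q u) (kinvWeight q u) := by
  let shift : (ℤ → A) →ₐ[F] (ℤ → A) := AlgHom.pi fun n => Pi.evalAlgHom F (fun _ => A) (n + 1)
  have hk : shift (kWeight q u) = (q ^ 2)⁻¹ • kWeight q u := by
    funext n; simpa [shift] using kWeight_add u hq n 1
  have hkinv : shift (kinvWeight q u) = (q ^ 2)⁻¹⁻¹ • kinvWeight q u := by
    funext n; simpa [shift] using kinvWeight_add_one u hq n
  rw [← feRHS_smul q s t φ hq, ← hk, ← hkinv]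
  exact map_feRHS q s t φ shift _ _ _ _

variable (q)

def vermaGen : BGen → Module.End F (ℤ →₀ A)
  | .cs => diagonal F fun _ => cs
  | .ct => diagonal F fun _ => ct
  | .k => diagonal F (kWeight q u)
  | .kinv => diagonal F (kinvWeight q u)
  | .e => weightedShift F (-1) (eWeight q s t φ cs ct u)
  | .f => weightedShift F 1 1

lemma lift_vermaGen_of_rel (hq : q ≠ 0) {x y : FreeAlgebra F BGen} (h : BRel q s t φ x y) :
    FreeAlgebra.lift F (vermaGen q s t φ cs ct u) x
      = FreeAlgebra.lift F (vermaGen q s t φ cs ct u) y := by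
  have hcentral (z : A) (g : BGen) :
      Commute (diagonal F fun _ => z) (vermaGen q s t φ cs ct u g) := by
    cases g <;> exact commute_diagonal_const _ _ _
  cases h with
  | csCentral x =>
    simp only [map_mul, FreeAlgebra.lift_ι_apply]
    exact FreeAlgebra.commute_lift (hcentral cs) x
  | ctCentral x =>
    simp only [map_mul, FreeAlgebra.lift_ι_apply]
    exact FreeAlgebra.commute_lift (hcentral ct) x
  | kkinv =>
    simp only [map_mul, map_one, FreeAlgebra.lift_ι_apply, vermaGen]
    rw [← map_mul, kWeight_mul_kinvWeight u hq, map_one]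
  | kinvk =>
    simp only [map_mul, map_one, FreeAlgebra.lift_ι_apply, vermaGen]
    rw [← map_mul, mul_comm, kWeight_mul_kinvWeight u hq, map_one]
  | ke =>
    simp only [map_mul, map_smul, FreeAlgebra.lift_ι_apply, vermaGen, diagonal_apply,
      weightedShift_mul_weightedShift, smul_weightedShift, add_zero, zero_add,
      kWeight_add u hq, zpow_neg_one, inv_inv]
    congr 1
    funext n
    rw [Pi.smul_apply, smul_mul_assoc, mul_comm]
  | kf =>
    simp only [map_mul, map_smul, FreeAlgebra.lift_ι_apply, vermaGen, diagonal_apply,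
      weightedShift_mul_weightedShift, smul_weightedShift, add_zero, zero_add,
      kWeight_add u hq, zpow_one, Pi.one_apply, mul_one, one_mul]
    rfl
  | fe =>
    change _ = FreeAlgebra.lift F _ (feRHS q s t φ _ _ _ _)
    rw [map_mul, map_feRHS q s t φ (FreeAlgebra.lift F (vermaGen q s t φ cs ct u))]
    simp only [FreeAlgebra.lift_ι_apply, vermaGen]
    rw [← map_feRHS, weightedShift_mul_weightedShift]
    simp only [neg_add_cancel, Pi.one_apply, one_mul]
    rfl
  | ef =>
    change _ = FreeAlgebra.lift F _ (efRHS q s t φ _ _ _ _)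
    rw [map_mul, map_efRHS q s t φ (FreeAlgebra.lift F (vermaGen q s t φ cs ct u))]
    simp only [FreeAlgebra.lift_ι_apply, vermaGen]
    rw [← map_efRHS, ← eWeight_add_one s t φ cs ct u hq, weightedShift_mul_weightedShift]
    simp only [add_neg_cancel, Pi.one_apply, mul_one]
    rfl

def vermaRep (hq : q ≠ 0) : BAlg q s t φ →ₐ[F] Module.End F (ℤ →₀ A) :=
  RingQuot.liftAlgHom F ⟨FreeAlgebra.lift F (vermaGen q s t φ cs ct u),
    fun _ _ h => lift_vermaGen_of_rel q s t φ cs ct u hq h⟩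

lemma vermaRep_bgen (hq : q ≠ 0) (g : BGen) :
    vermaRep q s t φ cs ct u hq (bgen q s t φ g) = vermaGen q s t φ cs ct u g :=
  (RingQuot.liftAlgHom_mkAlgHom_apply F _ _ _).trans (FreeAlgebra.lift_ι_apply _ _)

end VermaModule

namespace LaurentPolynomial

variable {R : Type*} [CommSemiring R]

def unitT : (LaurentPolynomial R)ˣ where
  val := T 1
  inv := T (-1)
  val_inv := by rw [← T_add, add_neg_cancel, T_zero]
  inv_val := by rw [← T_add, neg_add_cancel, T_zero]

lemma adjoin_C_X_T_eq_top :
    Algebra.adjoin R {C (MvPolynomial.X 0), C (MvPolynomial.X 1), T 1, T (-1)}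
      = (⊤ : Subalgebra R (LaurentPolynomial (MvPolynomial (Fin 2) R))) := by
  set S : Subalgebra R (LaurentPolynomial (MvPolynomial (Fin 2) R)) :=
    Algebra.adjoin R {C (MvPolynomial.X 0), C (MvPolynomial.X 1), T 1, T (-1)}
  have hC (a : MvPolynomial (Fin 2) R) : C a ∈ S := by
    induction a using MvPolynomial.induction_on with
    | C r => exact S.algebraMap_mem r
    | add p p' hp hp' => rw [map_add]; exact add_mem hp hp'
    | mul_X p i hp =>
      rw [map_mul]
      refine mul_mem hp (Algebra.subset_adjoin ?_)
      fin_cases i <;> simp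
  have hT (n : ℤ) : T n ∈ S := by
    induction n using Int.induction_on with
    | zero => rw [T_zero]; exact one_mem S
    | succ n hn => rw [T_add]; exact mul_mem hn (Algebra.subset_adjoin (by simp))
    | pred n hn =>
      rw [sub_eq_add_neg, T_add]; exact mul_mem hn (Algebra.subset_adjoin (by simp))
  exact eq_top_iff.2 fun p _ =>
    p.induction_on' (fun _ _ => add_mem) fun n a => mul_mem (hC a) (hT n)

end LaurentPolynomial

section LaurentSubalgebra

variable {F : Type*} [Field F] (q : F) (s t : ℤ) (φ : LaurentPolynomial F)

lemma bgen_mem_center_of_rel {g : BGen}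
    (h : ∀ x, BRel q s t φ (FreeAlgebra.ι F g * x) (x * FreeAlgebra.ι F g)) :
    bgen q s t φ g ∈ Subalgebra.center F (BAlg q s t φ) := by
  refine Subalgebra.mem_center_iff.2 fun b => ?_
  obtain ⟨x, rfl⟩ := RingQuot.mkAlgHom_surjective F (BRel q s t φ) b
  have hx := RingQuot.mkAlgHom_rel F (h x)
  rw [map_mul, map_mul] at hx
  exact hx.symm

def kUnit : (BAlg q s t φ)ˣ where
  val := bgen q s t φ .k
  inv := bgen q s t φ .kinv
  val_inv := by
    have h := RingQuot.mkAlgHom_rel F (BRel.kkinv (q := q) (s := s) (t := t) (φ := φ))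
    rwa [map_mul, map_one] at h
  inv_val := by
    have h := RingQuot.mkAlgHom_rel F (BRel.kinvk (q := q) (s := s) (t := t) (φ := φ))
    rwa [map_mul, map_one] at h

def centralPoly : MvPolynomial (Fin 2) F →ₐ[F] Subalgebra.center F (BAlg q s t φ) :=
  MvPolynomial.aeval
    ![⟨bgen q s t φ .cs, bgen_mem_center_of_rel q s t φ BRel.csCentral⟩,
      ⟨bgen q s t φ .ct, bgen_mem_center_of_rel q s t φ BRel.ctCentral⟩]

def ofLaurent : LaurentPolynomial (MvPolynomial (Fin 2) F) →ₐ[F] BAlg q s t φ :=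
  AddMonoidAlgebra.liftNCAlgHom ((Subalgebra.center F _).val.comp (centralPoly q s t φ))
    ((Units.coeHom _).comp (zpowersHom _ (kUnit q s t φ)))
    fun p _ => (Subalgebra.mem_center_iff.1 (centralPoly q s t φ p).2 _).symm

lemma ofLaurent_single (n : ℤ) (p : MvPolynomial (Fin 2) F) :
    ofLaurent q s t φ (.single n p) = centralPoly q s t φ p * ↑(kUnit q s t φ ^ n) := by
  change AddMonoidAlgebra.liftNC _ _ _ = _
  rw [AddMonoidAlgebra.liftNC_single]
  rfl

lemma ofLaurent_C (p : MvPolynomial (Fin 2) F) :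
    ofLaurent q s t φ (C p) = centralPoly q s t φ p := by
  rw [← single_eq_C, ofLaurent_single, zpow_zero, Units.val_one, mul_one]

lemma ofLaurent_T (n : ℤ) : ofLaurent q s t φ (T n) = ↑(kUnit q s t φ ^ n) := by
  rw [T, ofLaurent_single, map_one, Subalgebra.coe_one, one_mul]

lemma ofLaurent_C_X_zero : ofLaurent q s t φ (C (MvPolynomial.X 0)) = bgen q s t φ .cs := by
  rw [ofLaurent_C, centralPoly, MvPolynomial.aeval_X]; rfl

lemma ofLaurent_C_X_one : ofLaurent q s t φ (C (MvPolynomial.X 1)) = bgen q s t φ .ct := by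
  rw [ofLaurent_C, centralPoly, MvPolynomial.aeval_X]; rfl

lemma ofLaurent_T_one : ofLaurent q s t φ (T 1) = bgen q s t φ .k := by
  rw [ofLaurent_T, zpow_one]; rfl

lemma ofLaurent_T_neg_one : ofLaurent q s t φ (T (-1)) = bgen q s t φ .kinv := by
  rw [ofLaurent_T, zpow_neg_one]; rfl

lemma range_ofLaurent :
    (ofLaurent q s t φ).range = Algebra.adjoin F
      {bgen q s t φ .cs, bgen q s t φ .ct, bgen q s t φ .k, bgen q s t φ .kinv} := by
  rw [← Algebra.map_top, ← adjoin_C_X_T_eq_top, AlgHom.map_adjoin]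
  simp only [Set.image_insert_eq, Set.image_singleton, ofLaurent_C_X_zero, ofLaurent_C_X_one,
    ofLaurent_T_one, ofLaurent_T_neg_one]

lemma vermaRep_ofLaurent_single_zero (hq : q ≠ 0)
    (p c : LaurentPolynomial (MvPolynomial (Fin 2) F)) :
    vermaRep q s t φ (C (MvPolynomial.X 0)) (C (MvPolynomial.X 1)) unitT hq (ofLaurent q s t φ p)
      (Finsupp.single 0 c) = Finsupp.single 0 (p * c) := by
  have hp : p ∈ Algebra.adjoin F {C (MvPolynomial.X 0), C (MvPolynomial.X 1), T 1, T (-1)} := by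
    rw [adjoin_C_X_T_eq_top]; trivial
  induction hp using Algebra.adjoin_induction generalizing c with
  | mem x hx =>
    rcases hx with rfl | rfl | rfl | rfl <;>
      simp [ofLaurent_C_X_zero, ofLaurent_C_X_one, ofLaurent_T_one, ofLaurent_T_neg_one,
        vermaRep_bgen, vermaGen, diagonal_apply, kWeight, kinvWeight, unitT]
  | algebraMap r =>
    rw [AlgHom.commutes, AlgHom.commutes, Module.algebraMap_end_apply, Finsupp.smul_single,
      Algebra.smul_def]
  | add x y _ _ hx hy =>
    rw [map_add, map_add, LinearMap.add_apply, hx, hy, add_mul, Finsupp.single_add]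
  | mul x y _ _ hx hy => rw [map_mul, map_mul, Module.End.mul_apply, hy, hx, mul_assoc]

lemma ofLaurent_injective (hq : q ≠ 0) : Function.Injective (ofLaurent q s t φ) := by
  refine Function.LeftInverse.injective (g := fun x => vermaRep q s t φ (C (MvPolynomial.X 0))
    (C (MvPolynomial.X 1)) (unitT (R := MvPolynomial (Fin 2) F)) hq x (Finsupp.single 0 1) 0)
    fun p => ?_
  simp only [vermaRep_ofLaurent_single_zero, mul_one, Finsupp.single_eq_same]

end LaurentSubalgebra

theorem stmt16_general {F : Type*} [Field F] (q : F) (hq0 : q ≠ 0)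
    (s t : ℤ)
    (φ : LaurentPolynomial F)
    (B0 : Subalgebra F (BAlg q s t φ))
    (hB0 : B0 = Algebra.adjoin F
      {bgen q s t φ BGen.cs, bgen q s t φ BGen.ct, bgen q s t φ BGen.k,
        bgen q s t φ BGen.kinv}) :
    (∀ x y : B0, x * y = y * x) ∧
    ∃ g : B0 ≃ₐ[F] LaurentPolynomial (MvPolynomial (Fin 2) F),
      (∀ x : B0, (x : BAlg q s t φ) = bgen q s t φ BGen.k → g x = T 1) ∧
      (∀ x : B0, (x : BAlg q s t φ) = bgen q s t φ BGen.kinv → g x = T (-1)) ∧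
      (∀ x : B0, (x : BAlg q s t φ) = bgen q s t φ BGen.cs →
        g x = LaurentPolynomial.C (MvPolynomial.X 0)) ∧
      (∀ x : B0, (x : BAlg q s t φ) = bgen q s t φ BGen.ct →
        g x = LaurentPolynomial.C (MvPolynomial.X 1)) := by
  let g : B0 ≃ₐ[F] LaurentPolynomial (MvPolynomial (Fin 2) F) :=
    (Subalgebra.equivOfEq _ _ (hB0.trans (range_ofLaurent q s t φ).symm)).trans
      (AlgEquiv.ofInjective _ (ofLaurent_injective q s t φ hq0)).symm
  have hg (x : B0) (p) (hx : (x : BAlg q s t φ) = ofLaurent q s t φ p) : g x = p := by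
    rw [AlgEquiv.trans_apply, AlgEquiv.symm_apply_eq]
    exact Subtype.ext hx
  refine ⟨fun x y => g.injective (by rw [map_mul, map_mul, mul_comm]), g, ?_, ?_, ?_, ?_⟩
  · exact fun x hx => hg x _ (hx.trans (ofLaurent_T_one q s t φ).symm)
  · exact fun x hx => hg x _ (hx.trans (ofLaurent_T_neg_one q s t φ).symm)
  · exact fun x hx => hg x _ (hx.trans (ofLaurent_C_X_zero q s t φ).symm)
  · exact fun x hx => hg x _ (hx.trans (ofLaurent_C_X_one q s t φ).symm)

set_option synthInstance.maxHeartbeats 1000000 in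
set_option maxHeartbeats 1000000 in
theorem stmt16 {F : Type*} [Field F] (q : F) (hq0 : q ≠ 0)
    (hq : ∀ n : ℕ, 0 < n → q ^ n ≠ 1) (s t : ℤ) (hst : s ≠ t)
    (φ : LaurentPolynomial F) (hφ : φ.coeff s = 0 ∧ φ.coeff t = 0)
    (B0 : Subalgebra F (BAlg q s t φ))
    (hB0 : B0 = Algebra.adjoin F
      {bgen q s t φ BGen.cs, bgen q s t φ BGen.ct, bgen q s t φ BGen.k,
        bgen q s t φ BGen.kinv}) :
    (∀ x y : B0, x * y = y * x) ∧
    ∃ g : B0 ≃ₐ[F] LaurentPolynomial (MvPolynomial (Fin 2) F),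
      (∀ x : B0, (x : BAlg q s t φ) = bgen q s t φ BGen.k → g x = T 1) ∧
      (∀ x : B0, (x : BAlg q s t φ) = bgen q s t φ BGen.kinv → g x = T (-1)) ∧
      (∀ x : B0, (x : BAlg q s t φ) = bgen q s t φ BGen.cs →
        g x = LaurentPolynomial.C (MvPolynomial.X 0)) ∧
      (∀ x : B0, (x : BAlg q s t φ) = bgen q s t φ BGen.ct →
        g x = LaurentPolynomial.C (MvPolynomial.X 1)) :=
  stmt16_general q hq0 s t φ B0 hB0
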